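/- arXiv:1003.4398 — 5 statements merged into one kernel-verified Lean document; each statement's English description precedes it below -/
import Mathlib

section
/- For every (m+1)-colored rooted tree τ, the doubling index 𝔡 defined by 𝔡(∅)=0, 𝔡(•_l)=1, and 𝔡([τ₁,…,τ_κ]_l) = max_j 𝔡(τ_j) if exactly one of the τ_j attains the maximum, and max_j 𝔡(τ_j)+1 if at least two of the τ_j attain the maximum, satisfies: if 𝔡(τ)=k with k≥1, then ρ(τ) ≥ 2^{k−1} − 1/2. -/
inductive CTree (m : ℕ) : Type
  | node : Fin (m + 1) → List (CTree m) → CTree m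

namespace CTree

variable {m : ℕ}

def rho : CTree m → ℚ
  | .node l ts => (if (l : ℕ) = 0 then 1 else 1/2) + (ts.attach.map (fun t => rho t.1)).sum
decreasing_by
  all_goals try simp only [CTree.node.sizeOf_spec, List.cons.sizeOf_spec, List.nil.sizeOf_spec]
  all_goals try have := List.sizeOf_lt_of_mem t.2
  all_goals omega

def height : CTree m → ℕ
  | .node _ ts => 1 + (ts.attach.map (fun t => height t.1)).foldr max 0
decreasing_by
  all_goals try simp only [CTree.node.sizeOf_spec, List.cons.sizeOf_spec, List.nil.sizeOf_spec]
  all_goals try have := List.sizeOf_lt_of_mem t.2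
  all_goals omega

def ram : CTree m → ℕ
  | .node _ [] => 1
  | .node _ [t] => ram t
  | .node _ ts => 1 + (ts.attach.map (fun t => ram t.1)).foldr max 0
decreasing_by
  all_goals try simp only [CTree.node.sizeOf_spec, List.cons.sizeOf_spec, List.nil.sizeOf_spec]
  all_goals try have := List.sizeOf_lt_of_mem t.2
  all_goals omega

def dbl : CTree m → ℕ
  | .node _ [] => 1
  | .node _ ts =>
      let ds := ts.attach.map (fun t => dbl t.1)
      let M := ds.foldr max 0
      if 2 ≤ ds.count M then M + 1 else M
decreasing_by
  all_goals try simp only [CTree.node.sizeOf_spec, List.cons.sizeOf_spec, List.nil.sizeOf_spec]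
  all_goals try have := List.sizeOf_lt_of_mem t.2
  all_goals omega


end CTree

/-! By induction on the tree. Let `M` be the largest doubling index among the children of the root.
Every child attaining it has weight at least `2 ^ (M - 1) - 1/2 ≥ 1/2`, and the root itself weighs
at least `1/2`. If two children attain `M`, the index is `M + 1` and the weight is at least
`2 * (2 ^ (M - 1) - 1/2) + 1/2 ≥ 2 ^ M - 1/2`; otherwise one child already suffices. -/

theorem List.count_map_mul_le_sum_map {α β R : Type*} [BEq β] [LawfulBEq β] [Semiring R]
    [PartialOrder R] [IsOrderedRing R] {l : List α} {f : α → β} {g : α → R} {b : β} {c : R}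
    (hg : ∀ x ∈ l, 0 ≤ g x) (hc : ∀ x ∈ l, f x = b → c ≤ g x) :
    ((l.map f).count b : R) * c ≤ (l.map g).sum := by
  induction l with
  | nil => simp
  | cons a l ih =>
    have ih := ih (fun x hx => hg x (mem_cons_of_mem a hx)) (fun x hx => hc x (mem_cons_of_mem a hx))
    rw [map_cons, map_cons, count_cons, sum_cons]
    by_cases ha : f a = b
    · simp only [ha, beq_self_eq_true, if_true, Nat.cast_add, Nat.cast_one, add_mul, one_mul]
      rw [add_comm]
      exact add_le_add (hc a mem_cons_self ha) ih
    · simp only [ha, beq_iff_eq, if_false, add_zero]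
      exact ih.trans (le_add_of_nonneg_left (hg a mem_cons_self))

namespace CTree

variable {m : ℕ}

theorem node_induction {motive : CTree m → Prop}
    (node : ∀ l ts, (∀ t ∈ ts, motive t) → motive (.node l ts)) : ∀ τ, motive τ
  | .node l ts => node l ts fun t _ => node_induction node t
decreasing_by
  have := List.sizeOf_lt_of_mem ‹t ∈ ts›
  simp only [CTree.node.sizeOf_spec]
  omega

theorem rho_node (l : Fin (m + 1)) (ts : List (CTree m)) :
    rho (.node l ts) = (if (l : ℕ) = 0 then 1 else 1/2) + (ts.map rho).sum := by
  rw [rho, List.attach_map_val]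

theorem dbl_node {l : Fin (m + 1)} {ts : List (CTree m)} (hts : ts ≠ []) :
    dbl (.node l ts) =
      if 2 ≤ (ts.map dbl).count ((ts.map dbl).foldr max 0) then (ts.map dbl).foldr max 0 + 1
      else (ts.map dbl).foldr max 0 := by
  obtain ⟨t, ts, rfl⟩ := List.exists_cons_of_ne_nil hts
  rw [dbl, List.attach_map_val]
  exact List.cons_ne_nil t ts

theorem half_le_colorWeight (l : Fin (m + 1)) : (1/2 : ℚ) ≤ if (l : ℕ) = 0 then 1 else 1/2 := by
  split <;> norm_num

theorem rho_nonneg : ∀ τ : CTree m, 0 ≤ rho τ :=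
  node_induction fun l ts ih => by
    rw [rho_node]
    have hw := half_le_colorWeight l
    have hsum : 0 ≤ (ts.map rho).sum := List.sum_nonneg (by simpa using ih)
    linarith

theorem two_pow_sub_half_le_rho : ∀ τ : CTree m, (2 : ℚ) ^ (dbl τ - 1) - 1/2 ≤ rho τ :=
  node_induction fun l ts ih => by
    have hw := half_le_colorWeight l
    rw [rho_node]
    rcases eq_or_ne ts [] with rfl | hts
    · rw [dbl, List.map_nil, List.sum_nil]
      norm_num at hw ⊢
      exact hw
    rw [dbl_node hts]
    set M := (ts.map dbl).foldr max 0
    have hsum : ((ts.map dbl).count M : ℚ) * (2 ^ (M - 1) - 1/2) ≤ (ts.map rho).sum :=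
      List.count_map_mul_le_sum_map (fun t _ => rho_nonneg t) fun t ht hM => hM ▸ ih t ht
    have hc : (1/2 : ℚ) ≤ 2 ^ (M - 1) - 1/2 := by
      linarith [one_le_pow₀ (M₀ := ℚ) (a := 2) (n := M - 1) (by norm_num)]
    by_cases hcount : 2 ≤ (ts.map dbl).count M
    · rw [if_pos hcount, Nat.add_sub_cancel]
      have hpow : (2 : ℚ) ^ M ≤ 2 * 2 ^ (M - 1) := by
        rw [← pow_succ']
        exact pow_le_pow_right₀ (by norm_num) (by omega)
      have hcountQ : (2 : ℚ) ≤ (ts.map dbl).count M := by exact_mod_cast hcount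
      have := (mul_le_mul_of_nonneg_right hcountQ (by linarith)).trans hsum
      linarith
    · rw [if_neg hcount]
      have hmem : M ∈ ts.map dbl :=
        List.maximum_mem (List.foldr_max_of_ne_nil (by simpa using hts)).symm
      have hcountQ : (1 : ℚ) ≤ (ts.map dbl).count M := by
        exact_mod_cast List.count_pos_iff.mpr hmem
      have := (le_mul_of_one_le_left (by linarith) hcountQ).trans hsum
      linarith

end CTree

open CTree in
theorem stmt2_general (m : ℕ) (τ : CTree m) (k : ℕ) (h : dbl τ = k) :
    (2 : ℚ) ^ (k - 1) - 1/2 ≤ rho τ :=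
  h ▸ two_pow_sub_half_le_rho τ

open CTree in
theorem stmt2 (m : ℕ) (τ : CTree m) (k : ℕ) (hk : 1 ≤ k) (h : dbl τ = k) :
    (2 : ℚ) ^ (k - 1) - 1/2 ≤ rho τ :=
  stmt2_general m τ k h
end

section
/- For semi-implicit methods, the growth function 𝔥_s defined by 𝔥_s(∅)=0, 𝔥_s([τ₁,…,τ_κ]_l)=1 if l>0, and 𝔥_s([τ₁,…,τ_κ]_0)=1+max_j 𝔥_s(τ_j), satisfies: if 𝔥_s(τ)=k with k ≥ 1, then ρ(τ) ≥ k − 1/2. -/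
namespace CTree

variable {m : ℕ}

/-- semi-implicit height-type growth function 𝔥ₛ -/
def hs : CTree m → ℕ
  | .node l ts => if 0 < (l : ℕ) then 1 else 1 + (ts.attach.map (fun t => hs t.1)).foldr max 0
decreasing_by
  all_goals try simp only [CTree.node.sizeOf_spec, List.cons.sizeOf_spec, List.nil.sizeOf_spec]
  all_goals try have := List.sizeOf_lt_of_mem t.2
  all_goals omega

/-- semi-implicit ramification-type growth function 𝔯ₛ -/
def rs : CTree m → ℕ
  | .node _ [] => 1
  | .node l [t] => if 0 < (l : ℕ) then 1 else rs t
  | .node l ts => if 0 < (l : ℕ) then 1 else 1 + (ts.attach.map (fun t => rs t.1)).foldr max 0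
decreasing_by
  all_goals try simp only [CTree.node.sizeOf_spec, List.cons.sizeOf_spec, List.nil.sizeOf_spec]
  all_goals try have := List.sizeOf_lt_of_mem t.2
  all_goals omega

/-- semi-implicit doubling-type growth function 𝔡ₛ -/
def dsm : CTree m → ℕ
  | .node _ [] => 1
  | .node l ts =>
      if 0 < (l : ℕ) then 1 else
      let vals := ts.attach.map (fun t => dsm t.1)
      let M := vals.foldr max 0
      if 2 ≤ vals.count M then M + 1 else M
decreasing_by
  all_goals try simp only [CTree.node.sizeOf_spec, List.cons.sizeOf_spec, List.nil.sizeOf_spec]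
  all_goals try have := List.sizeOf_lt_of_mem t.2
  all_goals omega


end CTree

theorem List.foldr_max_le_sum_add {α R : Type*} [Semiring R] [LinearOrder R] [IsStrictOrderedRing R]
    {l : List α} {f : α → ℕ} {g : α → R} {c : R}
    (hc : 0 ≤ c) (hg : ∀ x ∈ l, 0 ≤ g x) (hfg : ∀ x ∈ l, (f x : R) ≤ g x + c) :
    (((l.map f).foldr max 0 : ℕ) : R) ≤ (l.map g).sum + c := by
  induction l with
  | nil => simpa using hc
  | cons a l ih =>
    simp only [List.forall_mem_cons] at hg hfg
    have hsum : 0 ≤ (l.map g).sum := List.sum_nonneg (by simpa using hg.2)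
    simp only [List.map_cons, List.foldr_cons, List.sum_cons, Nat.cast_max, max_le_iff]
    constructor
    · exact hfg.1.trans (add_le_add_left (le_add_of_nonneg_right hsum) c)
    · exact (ih hg.2 hfg.2).trans (add_le_add_left (le_add_of_nonneg_left hg.1) c)

namespace CTree

variable {m : ℕ}

theorem sizeOf_lt_of_mem_children {t : CTree m} {l : Fin (m + 1)} {ts : List (CTree m)}
    (ht : t ∈ ts) : sizeOf t < sizeOf (node l ts) :=
  (List.sizeOf_lt_of_mem ht).trans_le (by simp)

theorem half_le_rho (τ : CTree m) : (1 : ℚ) / 2 ≤ rho τ := by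
  obtain ⟨l, ts⟩ := τ
  have hsum : 0 ≤ (ts.attach.map fun t => rho t.1).sum :=
    List.sum_nonneg fun _ hx => by
      obtain ⟨t, -, rfl⟩ := List.mem_map.mp hx
      linarith [half_le_rho t.1]
  rw [rho]
  split <;> linarith
decreasing_by exact sizeOf_lt_of_mem_children t.2

theorem hs_sub_half_le_rho (τ : CTree m) : (hs τ : ℚ) - 1 / 2 ≤ rho τ := by
  obtain ⟨l, ts⟩ := τ
  by_cases hstoch : 0 < (l : ℕ)
  · rw [hs, if_pos hstoch]
    linarith [half_le_rho (node l ts)]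
  · have hmax := List.foldr_max_le_sum_add (l := ts.attach) (f := fun t => hs t.1)
      (g := fun t => rho t.1) (c := 1 / 2) (by norm_num) (fun t _ => by linarith [half_le_rho t.1])
      (fun t _ => by linarith [hs_sub_half_le_rho t.1])
    rw [hs, if_neg hstoch, rho, if_pos (by omega)]
    push_cast
    linarith
decreasing_by exact sizeOf_lt_of_mem_children t.2

end CTree

open CTree in
theorem stmt9_general (m : ℕ) (τ : CTree m) (k : ℕ) (h : hs τ = k) :
    (k : ℚ) - 1/2 ≤ rho τ := by
  subst h
  exact hs_sub_half_le_rho τ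

open CTree in
theorem stmt9 (m : ℕ) (τ : CTree m) (k : ℕ) (hk : 1 ≤ k) (h : hs τ = k) :
    (k : ℚ) - 1/2 ≤ rho τ :=
  stmt9_general m τ k h
end

section
/- If Φ₀(τ)=Φ(τ) for all colored rooted trees τ with 𝔯(τ) ≤ G₀, and Φ_{k+1} is defined by the modified Newton recursion Φ_{k+1}(∅)=1, Φ_{k+1}(τ) = Φ_ex(τ) + (Φ_k ∘ Φ_im)(τ) + ((Φ_{k+1} − Φ_k) ∗ Φ_im)(τ), where Φ satisfies the fixed point equation Φ(τ) = Φ_ex(τ) + (Φ ∘ Φ_im)(τ), then for all k ≥ 0, Φ_k(τ) = Φ(τ) for all τ with 𝔯(τ) ≤ G₀ + k. -/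
namespace CTree

variable {m : ℕ}

/-- All ordered splittings of a tree `τ` into a root-sharing subtree `θ` (`none` = empty tree)
together with the list of remainder trees `ω` left over when `θ` is removed from `τ`. -/
def split : CTree m → List (Option (CTree m) × List (CTree m))
  | .node l ts =>
    (none, [.node l ts]) ::
    ((ts.attach.map (fun t => split t.1)).sections.map
      (fun cs => (some (.node l (cs.filterMap Prod.fst)), (cs.map Prod.snd).flatten)))
decreasing_by
  all_goals try simp only [CTree.node.sizeOf_spec, List.cons.sizeOf_spec, List.nil.sizeOf_spec]
  all_goals try have := List.sizeOf_lt_of_mem t.2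
  all_goals omega

/-- Composition of B--series coefficient maps: `comp φx φy` is the coefficient map of
`B(φy, B(φx, x₀; h); h)`.  Coefficient maps are defined on `Option (CTree m)`,
with `none` playing the role of the empty tree ∅. -/
def comp {R : Type*} [CommRing R] (φx φy : Option (CTree m) → R) : Option (CTree m) → R
  | none => φy none
  | some τ => ((split τ).map (fun p => φy p.1 * (p.2.map (fun δ => φx (some δ))).prod)).sum

/-- The bilinear operation `∗`: sum over splittings with exactly one remainder tree. -/
def star {R : Type*} [CommRing R] (φx φy : Option (CTree m) → R) (τ : CTree m) : R :=
  (((split τ).filter (fun p => p.2.length == 1)).map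
    (fun p => φy p.1 * (p.2.map (fun δ => φx (some δ))).prod)).sum


end CTree

theorem List.Forall₂.exists_of_mem_left {α β : Type*} {R : α → β → Prop} {l₁ : List α}
    {l₂ : List β} (h : List.Forall₂ R l₁ l₂) {a : α} (ha : a ∈ l₁) : ∃ b ∈ l₂, R a b := by
  induction h with
  | nil => cases ha
  | cons hab _ ih =>
    rcases List.mem_cons.mp ha with rfl | ha
    · exact ⟨_, List.mem_cons_self, hab⟩
    · obtain ⟨b, hb, hr⟩ := ih ha
      exact ⟨b, List.mem_cons_of_mem _ hb, hr⟩

namespace CTree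

variable {m : ℕ}

theorem sizeOf_lt_sizeOf_node (l : Fin (m + 1)) {ts : List (CTree m)} {t : CTree m}
    (ht : t ∈ ts) : sizeOf t < sizeOf (node l ts) := by
  have := List.sizeOf_lt_of_mem ht
  simp only [CTree.node.sizeOf_spec]; omega

theorem induction_on {P : CTree m → Prop} (h : ∀ l ts, (∀ t ∈ ts, P t) → P (node l ts)) :
    ∀ τ, P τ
  | node l ts => h l ts fun t _ => induction_on h t
decreasing_by exact sizeOf_lt_sizeOf_node l ‹t ∈ ts›

theorem ram_node_singleton (l : Fin (m + 1)) (t : CTree m) : ram (node l [t]) = ram t := by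
  rw [ram.eq_def]

theorem ram_node_cons_cons (l : Fin (m + 1)) (a b : CTree m) (r : List (CTree m)) :
    ram (node l (a :: b :: r)) = 1 + ((a :: b :: r).map ram).foldr max 0 := by
  rw [ram.eq_def]
  simp only [List.attach_map_val]

theorem ram_lt_ram_node_cons_cons (l : Fin (m + 1)) {a b t : CTree m} {r : List (CTree m)}
    (ht : t ∈ a :: b :: r) : ram t < ram (node l (a :: b :: r)) := by
  have : ram t ≤ ((a :: b :: r).map ram).foldr max 0 :=
    List.le_max_of_le (List.mem_map_of_mem ht) le_rfl
  rw [ram_node_cons_cons]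
  omega

theorem ram_le_ram_node (l : Fin (m + 1)) {ts : List (CTree m)} {t : CTree m} (ht : t ∈ ts) :
    ram t ≤ ram (node l ts) := by
  match ts, ht with
  | [_], ht => rw [List.mem_singleton.mp ht, ram_node_singleton]
  | _ :: _ :: _, ht => exact (ram_lt_ram_node_cons_cons l ht).le

theorem mem_split_node_iff {l : Fin (m + 1)} {ts : List (CTree m)} {p} :
    p ∈ split (node l ts) ↔ p = (none, [node l ts]) ∨
      ∃ cs, List.Forall₂ (· ∈ ·) cs (ts.map split) ∧
        p = (some (node l (cs.filterMap Prod.fst)), (cs.map Prod.snd).flatten) := by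
  rw [split.eq_1, List.attach_map_val]
  simp only [List.mem_cons, List.mem_map, List.mem_sections, eq_comm (a := p)]

theorem mem_split_node_remainder {l : Fin (m + 1)} {ts : List (CTree m)} {p}
    (hp : p ∈ split (node l ts)) {δ : CTree m} (hδ : δ ∈ p.2) :
    (p.1 = none ∧ δ = node l ts) ∨ ∃ t ∈ ts, ∃ c ∈ split t, δ ∈ c.2 := by
  rcases mem_split_node_iff.mp hp with rfl | ⟨cs, hcs, rfl⟩
  · exact Or.inl ⟨rfl, List.mem_singleton.mp hδ⟩
  obtain ⟨_, hc', hδ⟩ := List.mem_flatten.mp hδ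
  obtain ⟨c, hc, rfl⟩ := List.mem_map.mp hc'
  obtain ⟨_, hs, hcs⟩ := hcs.exists_of_mem_left hc
  obtain ⟨t, ht, rfl⟩ := List.mem_map.mp hs
  exact Or.inr ⟨t, ht, c, hcs, hδ⟩

theorem le_of_mem_split {α : Type*} [Preorder α] {f : CTree m → α}
    (hf : ∀ l ts t, t ∈ ts → f t ≤ f (node l ts)) :
    ∀ τ, ∀ p ∈ split τ, ∀ δ ∈ p.2, f δ ≤ f τ := by
  refine induction_on fun l ts ih p hp δ hδ => ?_
  rcases mem_split_node_remainder hp hδ with ⟨-, rfl⟩ | ⟨t, ht, c, hc, hδ⟩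
  · exact le_rfl
  · exact (ih t ht c hc δ hδ).trans (hf l ts t ht)

theorem ram_le_of_mem_split {τ : CTree m} {p} (hp : p ∈ split τ) {δ : CTree m} (hδ : δ ∈ p.2) :
    ram δ ≤ ram τ :=
  le_of_mem_split (fun l _ _ ht => ram_le_ram_node l ht) τ p hp δ hδ

theorem sizeOf_lt_of_mem_split {τ θ : CTree m} {ω : List (CTree m)}
    (hp : (some θ, ω) ∈ split τ) {δ : CTree m} (hδ : δ ∈ ω) : sizeOf δ < sizeOf τ := by
  obtain ⟨l, ts⟩ := τ
  rcases mem_split_node_remainder hp hδ with ⟨⟨⟩, -⟩ | ⟨t, ht, c, hc, hδ⟩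
  exact (le_of_mem_split (fun l _ _ ht => (sizeOf_lt_sizeOf_node l ht).le) t c hc δ hδ).trans_lt
    (sizeOf_lt_sizeOf_node l ht)

theorem ram_lt_of_mem_split_of_two_le_length :
    ∀ τ : CTree m, ∀ p ∈ split τ, 2 ≤ p.2.length → ∀ δ ∈ p.2, ram δ < ram τ := by
  refine induction_on fun l ts ih p hp hlen δ hδ => ?_
  rcases mem_split_node_iff.mp hp with rfl | ⟨cs, hcs, rfl⟩
  · simp at hlen
  match ts, hcs with
  | [], hcs =>
    obtain rfl : cs = [] := List.forall₂_nil_right_iff.mp hcs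
    simp at hlen
  | [t], hcs =>
    obtain ⟨c, _, hc, hnil, rfl⟩ := List.forall₂_cons_right_iff.mp hcs
    obtain rfl := List.forall₂_nil_right_iff.mp hnil
    simp only [List.map_cons, List.map_nil, List.flatten_cons, List.flatten_nil,
      List.append_nil] at hlen hδ
    rw [ram_node_singleton]
    exact ih t (List.mem_singleton_self t) c hc hlen δ hδ
  | a :: b :: r, hcs =>
    obtain ⟨⟨⟩, -⟩ | ⟨t, ht, c, hc, hδ⟩ := mem_split_node_remainder hp hδ
    exact (ram_le_of_mem_split hc hδ).trans_lt (ram_lt_ram_node_cons_cons l ht)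

variable {R : Type*} [CommRing R]

def splitTerm (φx φy : Option (CTree m) → R) (p : Option (CTree m) × List (CTree m)) : R :=
  φy p.1 * (p.2.map fun δ => φx (some δ)).prod

theorem splitTerm_congr {φx χx : Option (CTree m) → R} (φy : Option (CTree m) → R)
    {p : Option (CTree m) × List (CTree m)} (h : ∀ δ ∈ p.2, φx (some δ) = χx (some δ)) :
    splitTerm φx φy p = splitTerm χx φy p := by
  rw [splitTerm, splitTerm, List.map_congr_left h]

theorem splitTerm_add_splitTerm_sub {φ φ' ψ : Option (CTree m) → R}
    {p : Option (CTree m) × List (CTree m)} (hp : p.2.length = 1) :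
    splitTerm φ ψ p + splitTerm (fun t => φ' t - φ t) ψ p = splitTerm φ' ψ p := by
  obtain ⟨δ, hδ⟩ := List.length_eq_one_iff.mp hp
  simp only [splitTerm, hδ, List.map_cons, List.map_nil, List.prod_cons, List.prod_nil]
  ring

theorem comp_add_star_sub (φ φ' ψ : Option (CTree m) → R) (τ : CTree m) :
    comp φ ψ (some τ) + star (fun t => φ' t - φ t) ψ τ =
      ((split τ).map fun p =>
        if p.2.length = 1 then splitTerm φ' ψ p else splitTerm φ ψ p).sum := by
  have hcomp : comp φ ψ (some τ) = ((split τ).map (splitTerm φ ψ)).sum := rfl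
  have hstar : star (fun t => φ' t - φ t) ψ τ = (((split τ).filter fun p => p.2.length = 1).map
      (splitTerm (fun t => φ' t - φ t) ψ)).sum := rfl
  rw [hcomp, hstar, List.sum_map_ite,
    ← List.sum_map_filter_add_sum_map_filter_not (fun p => p.2.length = 1) (splitTerm φ ψ),
    add_right_comm, ← List.sum_map_add]
  congr 2
  refine List.map_congr_left fun p hp => splitTerm_add_splitTerm_sub ?_
  simpa using (List.mem_filter.mp hp).2

theorem newton_step_eq_of_ram_le {Φex Φim Φf φ φ' : Option (CTree m) → R} {G : ℕ}
    (him : Φim none = 0)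
    (hf : ∀ τ, Φf (some τ) = Φex (some τ) + comp Φf Φim (some τ))
    (hφ : ∀ τ, ram τ ≤ G → φ (some τ) = Φf (some τ))
    (hφ' : ∀ τ, φ' (some τ) =
      Φex (some τ) + comp φ Φim (some τ) + star (fun t => φ' t - φ t) Φim τ) :
    ∀ τ, ram τ ≤ G + 1 → φ' (some τ) = Φf (some τ) := by
  intro τ
  induction τ using (measure (sizeOf : CTree m → ℕ)).wf.induction with
  | h τ ih =>
    intro hτ
    rw [hφ', hf, add_assoc, comp_add_star_sub]
    refine congrArg (Φex (some τ) + ·) (congrArg List.sum (List.map_congr_left fun p hp => ?_))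
    obtain ⟨_ | θ, ω⟩ := p
    · simp only [splitTerm, him, zero_mul, ite_self]
    split_ifs with hlen
    · refine splitTerm_congr Φim fun δ hδ => ih δ (sizeOf_lt_of_mem_split hp hδ) ?_
      exact (ram_le_of_mem_split hp hδ).trans hτ
    · refine splitTerm_congr Φim fun δ hδ => hφ δ ?_
      have := List.length_pos_of_mem hδ
      have := ram_lt_of_mem_split_of_two_le_length τ _ hp (by omega) δ hδ
      omega

end CTree

open CTree in
theorem stmt16_general {R : Type*} [CommRing R] (m : ℕ)
    (Φex Φim Φf : Option (CTree m) → R) (Φ : ℕ → Option (CTree m) → R) (G₀ : ℕ)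
    (him : Φim none = 0)
    (hf : ∀ τ : CTree m, Φf (some τ) = Φex (some τ) + comp Φf Φim (some τ))
    (h0 : ∀ τ : CTree m, ram τ ≤ G₀ → Φ 0 (some τ) = Φf (some τ))
    (hit : ∀ (k : ℕ) (τ : CTree m), Φ (k + 1) (some τ) =
        Φex (some τ) + comp (Φ k) Φim (some τ)
          + star (fun t => Φ (k + 1) t - Φ k t) Φim τ) :
    ∀ (k : ℕ) (τ : CTree m), ram τ ≤ G₀ + k → Φ k (some τ) = Φf (some τ) := by
  intro k
  induction k with
  | zero => exact h0
  | succ k ih => exact newton_step_eq_of_ram_le him hf ih (hit k)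

open CTree in
theorem stmt16 {R : Type*} [CommRing R] (m : ℕ)
    (Φex Φim Φf : Option (CTree m) → R) (Φ : ℕ → Option (CTree m) → R) (G₀ : ℕ)
    (hex : Φex none = 1) (him : Φim none = 0)
    (hfe : Φf none = 1)
    (hf : ∀ τ : CTree m, Φf (some τ) = Φex (some τ) + comp Φf Φim (some τ))
    (h0e : Φ 0 none = 1)
    (h0 : ∀ τ : CTree m, ram τ ≤ G₀ → Φ 0 (some τ) = Φf (some τ))
    (hite : ∀ k, Φ (k + 1) none = 1)
    (hit : ∀ (k : ℕ) (τ : CTree m), Φ (k + 1) (some τ) =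
        Φex (some τ) + comp (Φ k) Φim (some τ)
          + star (fun t => Φ (k + 1) t - Φ k t) Φim τ) :
    ∀ (k : ℕ) (τ : CTree m), ram τ ≤ G₀ + k → Φ k (some τ) = Φf (some τ) :=
  stmt16_general m Φex Φim Φf Φ G₀ him hf h0 hit
end

section
/- If Φ₀(τ)=Φ(τ) for all colored rooted trees τ with 𝔥(τ) ≤ G₀, and Φ_{k+1} is defined by the simple iteration recursion Φ_{k+1}(∅)=1, Φ_{k+1}(τ) = Φ_ex(τ) + (Φ_k ∘ Φ_im)(τ), where Φ satisfies Φ(τ) = Φ_ex(τ) + (Φ ∘ Φ_im)(τ), then for all k ≥ 0, Φ_k(τ) = Φ(τ) for all τ with 𝔥(τ) ≤ G₀ + k, where 𝔥 is the height function on trees. -/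
namespace CTree

variable {m : ℕ}

theorem height_lt_height_node {l : Fin (m + 1)} {ts : List (CTree m)} {t : CTree m}
    (ht : t ∈ ts) : height t < height (node l ts) := by
  have hle : height t ≤ (ts.attach.map fun t => height t.1).foldr max 0 :=
    List.le_max_of_le' 0 (List.mem_map_of_mem (List.mem_attach ts ⟨t, ht⟩)) le_rfl
  rw [height]
  omega

theorem mem_split_node {l : Fin (m + 1)} {ts : List (CTree m)}
    {p : Option (CTree m) × List (CTree m)} (hp : p ∈ split (node l ts)) :
    p = (none, [node l ts]) ∨
      (∃ θ, p.1 = some θ) ∧ ∀ δ ∈ p.2, ∃ t ∈ ts, ∃ q ∈ split t, δ ∈ q.2 := by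
  rw [split] at hp
  obtain rfl | hp := List.mem_cons.1 hp
  · exact Or.inl rfl
  obtain ⟨cs, hcs, rfl⟩ := List.mem_map.1 hp
  refine Or.inr ⟨⟨_, rfl⟩, fun δ hδ => ?_⟩
  simp only [List.mem_flatten, List.mem_map] at hδ
  obtain ⟨_, ⟨c, hc, rfl⟩, hδc⟩ := hδ
  obtain ⟨_, hsplit, hc⟩ := (List.mem_sections.1 hcs).exists_of_mem_left hc
  obtain ⟨t, -, rfl⟩ := List.mem_map.1 hsplit
  exact ⟨t.1, t.2, c, hc, hδc⟩

theorem height_le_of_mem_split (τ : CTree m) {p : Option (CTree m) × List (CTree m)}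
    (hp : p ∈ split τ) {δ : CTree m} (hδ : δ ∈ p.2) : height δ ≤ height τ := by
  induction τ using split.induct generalizing p δ with
  | _ l ts ih =>
    obtain rfl | ⟨-, hrem⟩ := mem_split_node hp
    · rw [List.mem_singleton.1 hδ]
    · obtain ⟨t, ht, q, hq, hδq⟩ := hrem δ hδ
      exact (ih ⟨t, ht⟩ hq hδq).trans (height_lt_height_node ht).le

theorem height_lt_of_mem_split {τ θ : CTree m} {p : Option (CTree m) × List (CTree m)}
    (hp : p ∈ split τ) (hθ : p.1 = some θ) {δ : CTree m} (hδ : δ ∈ p.2) :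
    height δ < height τ := by
  obtain ⟨l, ts⟩ := τ
  obtain rfl | ⟨-, hrem⟩ := mem_split_node hp
  · cases hθ
  · obtain ⟨t, ht, q, hq, hδq⟩ := hrem δ hδ
    exact (height_le_of_mem_split t hq hδq).trans_lt (height_lt_height_node ht)

theorem comp_some_congr_left {R : Type*} [CommRing R] {φx ψx φy : Option (CTree m) → R}
    (hy : φy none = 0) {τ : CTree m}
    (h : ∀ δ : CTree m, height δ < height τ → φx (some δ) = ψx (some δ)) :
    comp φx φy (some τ) = comp ψx φy (some τ) := by
  simp only [comp]
  congr 1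
  refine List.map_congr_left fun p hp => ?_
  rcases hθ : p.1 with _ | θ
  · simp [hy]
  · congr 1
    exact congrArg _ <| List.map_congr_left fun δ hδ =>
      h δ (height_lt_of_mem_split hp hθ hδ)

end CTree

open CTree in
theorem stmt17_general {R : Type*} [CommRing R] (m : ℕ)
    (Φex Φim Φf : Option (CTree m) → R) (Φ : ℕ → Option (CTree m) → R) (G₀ : ℕ)
    (him : Φim none = 0)
    (hf : ∀ τ : CTree m, Φf (some τ) = Φex (some τ) + comp Φf Φim (some τ))
    (h0 : ∀ τ : CTree m, height τ ≤ G₀ → Φ 0 (some τ) = Φf (some τ))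
    (hit : ∀ (k : ℕ) (τ : CTree m), Φ (k + 1) (some τ) =
        Φex (some τ) + comp (Φ k) Φim (some τ)) :
    ∀ (k : ℕ) (τ : CTree m), height τ ≤ G₀ + k → Φ k (some τ) = Φf (some τ) := by
  intro k
  induction k with
  | zero => exact h0
  | succ k ih =>
    intro τ hτ
    rw [hit, hf, comp_some_congr_left him fun δ hδ => ih δ (by omega)]

open CTree in
theorem stmt17 {R : Type*} [CommRing R] (m : ℕ)
    (Φex Φim Φf : Option (CTree m) → R) (Φ : ℕ → Option (CTree m) → R) (G₀ : ℕ)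
    (hex : Φex none = 1) (him : Φim none = 0)
    (hfe : Φf none = 1)
    (hf : ∀ τ : CTree m, Φf (some τ) = Φex (some τ) + comp Φf Φim (some τ))
    (h0e : Φ 0 none = 1)
    (h0 : ∀ τ : CTree m, height τ ≤ G₀ → Φ 0 (some τ) = Φf (some τ))
    (hite : ∀ k, Φ (k + 1) none = 1)
    (hit : ∀ (k : ℕ) (τ : CTree m), Φ (k + 1) (some τ) =
        Φex (some τ) + comp (Φ k) Φim (some τ)) :
    ∀ (k : ℕ) (τ : CTree m), height τ ≤ G₀ + k → Φ k (some τ) = Φf (some τ) :=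
  stmt17_general m Φex Φim Φf Φ G₀ him hf h0 hit
end

section
/- The composition of B-series coefficient maps is associative in the following sense: for coefficient maps φ_x, φ_y with φ_x(∅)=φ_y(∅)=1 and any coefficient map φ_z on colored rooted trees, (φ_x ∘ (φ_y ∘ φ_z))(τ) = ((φ_x ∘ φ_y) ∘ φ_z)(τ) for all τ ∈ T. -/
/-! Both sides sum over a splitting of `τ` followed by a splitting of its root part. Weighting
the innermost root part by an arbitrary `G` turns this into an identity about forests that is
multiplicative under concatenation, since a forest is split tree by tree; so it suffices to treat
one tree `node l ts`. There the terms whose innermost root part is empty add up to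
`G ∅ · (φx ∘ φy) τ` (this is where `φy ∅ = 1` enters), and the remaining terms form the same
identity for the forest `ts` with the weight `G ∘ node l`, which holds by induction. -/

theorem List.sum_map_sum_map_comm {α β M : Type*} [AddCommMonoid M] (l : List α) (l' : List β)
    (f : α → β → M) :
    (l.map fun a => (l'.map (f a)).sum).sum = (l'.map fun b => (l.map fun a => f a b).sum).sum := by
  simpa using Multiset.sum_map_sum_map (l : Multiset α) (l' : Multiset β) (f := f)

theorem List.sum_map_flatMap {α β M : Type*} [AddCommMonoid M] (l : List α) (g : α → List β)
    (f : β → M) : ((l.flatMap g).map f).sum = (l.map fun a => ((g a).map f).sum).sum := by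
  induction l with
  | nil => rfl
  | cons a l ih => simp [ih]

namespace CTree

variable {m : ℕ} {R : Type*} [CommRing R]

def prodCoeff (φ : Option (CTree m) → R) (ω : List (CTree m)) : R :=
  (ω.map fun δ => φ (some δ)).prod

@[simp] theorem prodCoeff_nil (φ : Option (CTree m) → R) : prodCoeff φ [] = 1 := rfl

@[simp] theorem prodCoeff_singleton (φ : Option (CTree m) → R) (t : CTree m) :
    prodCoeff φ [t] = φ (some t) := by
  simp [prodCoeff]

@[simp] theorem prodCoeff_append (φ : Option (CTree m) → R) (ω ω' : List (CTree m)) :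
    prodCoeff φ (ω ++ ω') = prodCoeff φ ω * prodCoeff φ ω' := by
  simp [prodCoeff]

theorem comp_some (φx φy : Option (CTree m) → R) (τ : CTree m) :
    comp φx φy (some τ) = ((split τ).map fun p => φy p.1 * prodCoeff φx p.2).sum := rfl

def splitForest (ts : List (CTree m)) : List (List (CTree m) × List (CTree m)) :=
  (ts.map split).sections.map fun cs => (cs.filterMap Prod.fst, (cs.map Prod.snd).flatten)

theorem split_node (l : Fin (m + 1)) (ts : List (CTree m)) :
    split (node l ts) =
      (none, [node l ts]) :: (splitForest ts).map fun p => (some (node l p.1), p.2) := by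
  rw [split, List.attach_map_val]
  simp [splitForest]

@[simp] theorem splitForest_nil : splitForest ([] : List (CTree m)) = [([], [])] := rfl

theorem splitForest_cons (t : CTree m) (ts : List (CTree m)) :
    splitForest (t :: ts) = (splitForest ts).flatMap fun q =>
      (split t).map fun p => (p.1.toList ++ q.1, p.2 ++ q.2) := by
  simp only [splitForest, List.map_cons, List.sections, List.map_flatMap, List.flatMap_map,
    List.map_map]
  congr 1; funext cs
  congr 1; funext p
  cases h : p.1 <;> simp [h]

section Sums

variable {M : Type*} [AddCommMonoid M]

theorem sum_splitForest_append (a b : List (CTree m)) (H : List (CTree m) × List (CTree m) → M) :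
    ((splitForest (a ++ b)).map H).sum = ((splitForest a).map fun p =>
      ((splitForest b).map fun q => H (p.1 ++ q.1, p.2 ++ q.2)).sum).sum := by
  induction a generalizing H with
  | nil => simp
  | cons t a ih =>
    simp only [List.cons_append, splitForest_cons, List.sum_map_flatMap, List.map_map,
      Function.comp_def, ih]
    refine congrArg List.sum (List.map_congr_left fun p _ => ?_)
    rw [List.sum_map_sum_map_comm (splitForest b)]
    simp only [List.append_assoc]

theorem sum_splitForest_singleton (t : CTree m) (H : List (CTree m) × List (CTree m) → M) :
    ((splitForest [t]).map H).sum = ((split t).map fun p => H (p.1.toList, p.2)).sum := by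
  simp [splitForest_cons, Function.comp_def]

end Sums

theorem comp_eq_sum_splitForest (φx φy : Option (CTree m) → R) (θ : Option (CTree m)) :
    comp φx φy θ =
      ((splitForest θ.toList).map fun q => φy q.1.head? * prodCoeff φx q.2).sum := by
  cases θ with
  | none => simp [comp]
  | some τ => simp [comp_some, sum_splitForest_singleton]

def CompAssocOn (φx φy : Option (CTree m) → R) (ts : List (CTree m)) : Prop :=
  ∀ G : List (CTree m) → R,
    ((splitForest ts).map fun p =>
        ((splitForest p.1).map fun q => G q.1 * prodCoeff φy q.2).sum * prodCoeff φx p.2).sum =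
      ((splitForest ts).map fun p => G p.1 * prodCoeff (comp φx φy) p.2).sum

variable {φx φy : Option (CTree m) → R}

theorem compAssocOn_nil : CompAssocOn φx φy [] := by
  simp [CompAssocOn]

theorem CompAssocOn.append {a b : List (CTree m)} (ha : CompAssocOn φx φy a)
    (hb : CompAssocOn φx φy b) : CompAssocOn φx φy (a ++ b) := by
  intro G
  have hb' : ∀ θa, ((splitForest b).map fun pb =>
        ((splitForest pb.1).map fun qb => G (θa ++ qb.1) * prodCoeff φy qb.2).sum
          * prodCoeff φx pb.2).sum =
      ((splitForest b).map fun pb => G (θa ++ pb.1) * prodCoeff (comp φx φy) pb.2).sum :=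
    fun θa => hb fun θs => G (θa ++ θs)
  have ha' := ha fun θa =>
    ((splitForest b).map fun pb => G (θa ++ pb.1) * prodCoeff (comp φx φy) pb.2).sum
  simp only [sum_splitForest_append, prodCoeff_append]
  calc _ = ((splitForest a).map fun pa =>
        ((splitForest pa.1).map fun qa =>
          ((splitForest b).map fun pb =>
            ((splitForest pb.1).map fun qb => G (qa.1 ++ qb.1) * prodCoeff φy qb.2).sum
              * prodCoeff φx pb.2).sum * prodCoeff φy qa.2).sum * prodCoeff φx pa.2).sum := by
        simp only [← List.sum_map_mul_right]
        refine congrArg List.sum (List.map_congr_left fun pa _ => ?_)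
        rw [List.sum_map_sum_map_comm (splitForest b)]
        simp only [mul_comm, mul_left_comm]
    _ = _ := by
        simp only [hb']
        rw [ha']
        simp only [← List.sum_map_mul_right]
        simp only [mul_comm, mul_left_comm]

theorem compAssocOn_of_forall_mem {ts : List (CTree m)} (h : ∀ t ∈ ts, CompAssocOn φx φy [t]) :
    CompAssocOn φx φy ts := by
  induction ts with
  | nil => exact compAssocOn_nil
  | cons t ts ih =>
    exact (h t List.mem_cons_self).append (ih fun t' ht' => h t' (List.mem_cons_of_mem t ht'))

theorem compAssocOn_node (hy : φy none = 1) (l : Fin (m + 1)) {ts : List (CTree m)}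
    (h : CompAssocOn φx φy ts) : CompAssocOn φx φy [node l ts] := by
  intro G
  have hG := h fun θs => G [node l θs]
  simp only [sum_splitForest_singleton, split_node, comp_some, List.map_cons, List.sum_cons,
    List.map_map, Function.comp_def, Option.toList_some, Option.toList_none, prodCoeff_singleton,
    splitForest_nil, List.map_nil, List.sum_nil, prodCoeff_nil, hy, mul_one, one_mul, add_zero]
  rw [← hG]
  simp only [add_mul, List.sum_map_add, mul_assoc, List.sum_map_mul_left]
  ring

theorem compAssocOn_singleton (hy : φy none = 1) : ∀ t : CTree m, CompAssocOn φx φy [t]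
  | node l ts => compAssocOn_node hy l
      (compAssocOn_of_forall_mem fun t _ => compAssocOn_singleton hy t)
decreasing_by
  have := List.sizeOf_lt_of_mem ‹t ∈ ts›
  simp only [node.sizeOf_spec]
  omega

theorem comp_assoc (φz : Option (CTree m) → R) (hy : φy none = 1) (θ : Option (CTree m)) :
    comp φx (comp φy φz) θ = comp (comp φx φy) φz θ := by
  cases θ with
  | none => rfl
  | some τ =>
    have h := compAssocOn_singleton (φx := φx) hy τ fun θs => φz θs.head?
    simp only [sum_splitForest_singleton] at h
    simpa [comp_some, comp_eq_sum_splitForest φy φz] using h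

end CTree

open CTree in
theorem stmt18_general {R : Type*} [CommRing R] (m : ℕ)
    (φx φy φz : Option (CTree m) → R) (hy : φy none = 1) :
    ∀ t : Option (CTree m), comp φx (comp φy φz) t = comp (comp φx φy) φz t :=
  comp_assoc φz hy

open CTree in
theorem stmt18 {R : Type*} [CommRing R] (m : ℕ)
    (φx φy φz : Option (CTree m) → R) (hx : φx none = 1) (hy : φy none = 1) :
    ∀ t : Option (CTree m), comp φx (comp φy φz) t = comp (comp φx φy) φz t :=
  stmt18_general m φx φy φz hy
end
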